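/- arXiv:2107.05266 — 3 statements merged into one kernel-verified Lean document; each statement's English description precedes it below -/
import Mathlib

section
/- Every multiplicative linear automorphism Φ of J_n (n ≥ 2) fixes the scalar part: writing Φ(a, u) = (a', u'), one has a' = a. Equivalently, Φ(a, u) - Φ(0, u) = (a, 0) and Φ maps pure elements to pure elements. -/
/-!
An automorphism fixes the unit `(1, 0)` (it is the unique two-sided identity and `Φ` is onto),
hence every scalar `(c, 0)`. If `Φ (0, u) = (b, v)`, squaring gives
`(⟪u, u⟫, 0) = (b ^ 2 + ‖v‖ ^ 2, 2 b v)`, so `b v = 0`; and `b ≠ 0` would force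
`Φ (0, u) = (b, 0) = Φ (b, 0)`, contradicting injectivity. Linearity then splits
`Φ (a, u) = (a, 0) + Φ (0, u)`.
-/

/-- The spin factor Jordan algebra product on `ℝ × ℝ^d` (here `J_n` with `d = n - 1`). -/
noncomputable def Jmul (d : ℕ) (x y : ℝ × EuclideanSpace ℝ (Fin d)) :
    ℝ × EuclideanSpace ℝ (Fin d) :=
  (x.1 * y.1 + (inner ℝ x.2 y.2 : ℝ), x.1 • y.2 + y.1 • x.2)

/-- An algebra automorphism of `J_n`: a linear bijection preserving the product. -/
def IsJAut (d : ℕ) (Φ : ℝ × EuclideanSpace ℝ (Fin d) → ℝ × EuclideanSpace ℝ (Fin d)) : Prop :=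
  Function.Bijective Φ ∧ IsLinearMap ℝ Φ ∧ ∀ x y, Φ (Jmul d x y) = Jmul d (Φ x) (Φ y)

section Jmul

variable {d : ℕ}

@[simp]
theorem Jmul_one_left (x : ℝ × EuclideanSpace ℝ (Fin d)) : Jmul d (1, 0) x = x := by
  simp [Jmul]

@[simp]
theorem Jmul_one_right (x : ℝ × EuclideanSpace ℝ (Fin d)) : Jmul d x (1, 0) = x := by
  simp [Jmul]

theorem Jmul_pure_self (u : EuclideanSpace ℝ (Fin d)) :
    Jmul d (0, u) (0, u) = (inner ℝ u u, 0) := by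
  simp [Jmul]

theorem snd_Jmul_self (x : ℝ × EuclideanSpace ℝ (Fin d)) :
    (Jmul d x x).2 = (2 * x.1) • x.2 := by
  simp [Jmul, two_mul, add_smul]

end Jmul

namespace IsJAut

variable {d : ℕ} {Φ : ℝ × EuclideanSpace ℝ (Fin d) → ℝ × EuclideanSpace ℝ (Fin d)}

theorem map_one (hΦ : IsJAut d Φ) : Φ (1, 0) = (1, 0) := by
  have h_left_id : ∀ y, Jmul d (Φ (1, 0)) y = y := by
    intro y
    obtain ⟨x, rfl⟩ := hΦ.1.2 y
    rw [← hΦ.2.2, Jmul_one_left]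
  simpa using h_left_id (1, 0)

theorem map_scalar (hΦ : IsJAut d Φ) (c : ℝ) : Φ (c, 0) = (c, 0) := by
  have hc : ((c, 0) : ℝ × EuclideanSpace ℝ (Fin d)) = c • (1, 0) := by simp
  rw [hc, hΦ.2.1.map_smul, hΦ.map_one]

theorem fst_map_pure (hΦ : IsJAut d Φ) (u : EuclideanSpace ℝ (Fin d)) : (Φ (0, u)).1 = 0 := by
  by_contra hb
  have h_sq : Φ (inner ℝ u u, 0) = Jmul d (Φ (0, u)) (Φ (0, u)) := by
    rw [← Jmul_pure_self, hΦ.2.2]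
  have h_bv : (2 * (Φ (0, u)).1) • (Φ (0, u)).2 = 0 := by
    rw [← snd_Jmul_self, ← h_sq, hΦ.map_scalar]
  have hv : (Φ (0, u)).2 = 0 :=
    (smul_eq_zero.mp h_bv).resolve_left (mul_ne_zero two_ne_zero hb)
  have h_eq : Φ (0, u) = Φ ((Φ (0, u)).1, 0) := by
    rw [hΦ.map_scalar, ← hv]
  exact hb (congrArg Prod.fst (hΦ.1.1 h_eq)).symm

theorem map_eq_scalar_add_map_pure (hΦ : IsJAut d Φ) (a : ℝ) (u : EuclideanSpace ℝ (Fin d)) :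
    Φ (a, u) = (a, 0) + Φ (0, u) := by
  have h_split : ((a, u) : ℝ × EuclideanSpace ℝ (Fin d)) = (a, 0) + (0, u) := by simp
  rw [h_split, hΦ.2.1.map_add, hΦ.map_scalar]

end IsJAut

theorem stmt_5_general (d : ℕ)
    (Φ : ℝ × EuclideanSpace ℝ (Fin d) → ℝ × EuclideanSpace ℝ (Fin d))
    (hΦ : IsJAut d Φ) :
    (∀ (a : ℝ) (u : EuclideanSpace ℝ (Fin d)), (Φ (a, u)).1 = a) ∧
    (∀ (a : ℝ) (u : EuclideanSpace ℝ (Fin d)), Φ (a, u) - Φ (0, u) = (a, 0)) ∧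
    (∀ u : EuclideanSpace ℝ (Fin d), (Φ (0, u)).1 = 0) := by
  refine ⟨fun a u => ?_, fun a u => ?_, hΦ.fst_map_pure⟩
  · simp [hΦ.map_eq_scalar_add_map_pure a u, hΦ.fst_map_pure u]
  · rw [hΦ.map_eq_scalar_add_map_pure a u, add_sub_cancel_right]

theorem stmt_5 (d : ℕ) (hd : 1 ≤ d)
    (Φ : ℝ × EuclideanSpace ℝ (Fin d) → ℝ × EuclideanSpace ℝ (Fin d))
    (hΦ : IsJAut d Φ) :
    (∀ (a : ℝ) (u : EuclideanSpace ℝ (Fin d)), (Φ (a, u)).1 = a) ∧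
    (∀ (a : ℝ) (u : EuclideanSpace ℝ (Fin d)), Φ (a, u) - Φ (0, u) = (a, 0)) ∧
    (∀ u : EuclideanSpace ℝ (Fin d), (Φ (0, u)).1 = 0) :=
  stmt_5_general d Φ hΦ
end

section
/- For any two pure elements u, v of J_n with ‖u‖ = ‖v‖, there exists an automorphism Φ of J_n with Φ(0, u) = (0, v). -/
open Submodule

theorem isJAut_prodMap_linearIsometryEquiv (d : ℕ)
    (f : EuclideanSpace ℝ (Fin d) ≃ₗᵢ[ℝ] EuclideanSpace ℝ (Fin d)) :
    IsJAut d (Prod.map id f) := by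
  refine ⟨Function.bijective_id.prodMap f.bijective,
    (LinearMap.id.prodMap f.toLinearMap).isLinear, ?_⟩
  rintro ⟨a, x⟩ ⟨b, y⟩
  simp [Jmul, f.inner_map_map, map_add, map_smul]

theorem stmt_9 (d : ℕ) (u v : EuclideanSpace ℝ (Fin d)) (h : ‖u‖ = ‖v‖) :
    ∃ Φ : ℝ × EuclideanSpace ℝ (Fin d) → ℝ × EuclideanSpace ℝ (Fin d),
      IsJAut d Φ ∧ Φ (0, u) = (0, v) :=
  ⟨Prod.map id (reflection (ℝ ∙ (u - v))ᗮ), isJAut_prodMap_linearIsometryEquiv d _,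
    by simp [reflection_sub h]⟩
end

section
/- For n ≥ 3, the image of the associator p(x, y, z) = (x ∘ y) ∘ z - x ∘ (y ∘ z) evaluated on J_n is exactly the set V of pure elements {(0, v) : v ∈ ℝ^{n-1}}. -/
/-- The associator in `J_n`. -/
noncomputable def Jassoc (d : ℕ) (x y z : ℝ × EuclideanSpace ℝ (Fin d)) :
    ℝ × EuclideanSpace ℝ (Fin d) :=
  Jmul d (Jmul d x y) z - Jmul d x (Jmul d y z)

/-!
The associator of `(a, u), (b, v), (c, w)` is `(0, ⟨u, v⟩ w - ⟨v, w⟩ u)`, so its image lies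
in `V = {(0, v)}`. Conversely, given `v`, pick a unit vector `e ⊥ v` (possible as
`dim V ≥ 2`); then `p((0, e), (0, e), (0, v)) = (0, v)`.
-/

open scoped RealInnerProductSpace

theorem Jassoc_fst (d : ℕ) (x y z : ℝ × EuclideanSpace ℝ (Fin d)) :
    (Jassoc d x y z).1 = 0 := by
  simp only [Jassoc, Jmul, Prod.fst_sub, inner_add_left, inner_add_right,
    real_inner_smul_left, real_inner_smul_right]
  ring

theorem Jassoc_snd (d : ℕ) (x y z : ℝ × EuclideanSpace ℝ (Fin d)) :
    (Jassoc d x y z).2 = ⟪x.2, y.2⟫ • z.2 - ⟪y.2, z.2⟫ • x.2 := by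
  simp only [Jassoc, Jmul, Prod.snd_sub, smul_add, smul_smul]
  module

theorem exists_norm_eq_one_inner_eq_zero {E : Type*} [NormedAddCommGroup E]
    [InnerProductSpace ℝ E] (hE : 2 ≤ Module.finrank ℝ E) (v : E) :
    ∃ e : E, ‖e‖ = 1 ∧ ⟪e, v⟫ = 0 := by
  have : FiniteDimensional ℝ E := Module.finite_of_finrank_pos (by omega)
  have hspan : ℝ ∙ v ≠ ⊤ :=
    (span_lt_top_of_card_lt_finrank (by simpa using Nat.lt_of_succ_le hE)).ne
  obtain ⟨w, hw, hw0⟩ := Submodule.ne_bot_iff _ |>.1 <|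
    mt Submodule.orthogonal_eq_bot_iff.1 hspan
  refine ⟨‖w‖⁻¹ • w, norm_smul_inv_norm hw0, ?_⟩
  rw [real_inner_smul_left, Submodule.mem_orthogonal_singleton_iff_inner_left.1 hw, mul_zero]

theorem Jassoc_of_norm_eq_one_of_inner_eq_zero (d : ℕ) {e v : EuclideanSpace ℝ (Fin d)}
    (he : ‖e‖ = 1) (hev : ⟪e, v⟫ = 0) : Jassoc d (0, e) (0, e) (0, v) = (0, v) := by
  ext1
  · exact Jassoc_fst d _ _ _
  · rw [Jassoc_snd, real_inner_self_eq_norm_sq, he, hev]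
    simp

theorem stmt_13 (d : ℕ) (hd : 2 ≤ d) :
    {p : ℝ × EuclideanSpace ℝ (Fin d) | ∃ x y z, Jassoc d x y z = p} =
      {p : ℝ × EuclideanSpace ℝ (Fin d) | p.1 = 0} := by
  ext p
  constructor
  · rintro ⟨x, y, z, rfl⟩
    exact Jassoc_fst d x y z
  · intro (hp : p.1 = 0)
    obtain ⟨e, he, hep⟩ :=
      exists_norm_eq_one_inner_eq_zero (by rwa [finrank_euclideanSpace_fin]) p.2
    exact ⟨_, _, _,
      (Jassoc_of_norm_eq_one_of_inner_eq_zero d he hep).trans (Prod.ext hp.symm rfl)⟩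
end
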